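/- Let G_u be the disjoint union of graphs G_v and G_w, let I be an independent set of G_u, and let ℓ ≤ |I|. Define x = min |J ∩ V(G_v)| and y = min |J ∩ V(G_w)|, both minima over all independent sets J of G_u that are TAR_ℓ-reachable from I. Then x = max{0, ℓ − RIS_y(G_w, I ∩ V(G_w))} and y = max{0, ℓ − RIS_x(G_v, I ∩ V(G_v))}, i.e., (x, y) is an ℓ-stable tuple. -/

import Mathlib

open Finset

variable {V : Type*}

/-- `I` is an independent set of `G`. -/
def IsIndep (G : SimpleGraph V) (I : Finset V) : Prop :=
  ∀ u ∈ I, ∀ v ∈ I, ¬ G.Adj u v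

/-- One token addition or removal between independent sets of size at least `k`. -/
def TarStep [DecidableEq V] (G : SimpleGraph V) (k : ℕ) (I J : Finset V) : Prop :=
  IsIndep G I ∧ IsIndep G J ∧ k ≤ I.card ∧ k ≤ J.card ∧
    ∃ v : V, J = insert v I ∨ I = insert v J

/-- TAR-reachability with token lower bound `k`. -/
def TarReach [DecidableEq V] (G : SimpleGraph V) (k : ℕ) (I J : Finset V) : Prop :=
  Relation.ReflTransGen (TarStep G k) I J

/-- TAR-reachability inside the subgraph of `G` induced by `S`. -/
def TarReachOn [DecidableEq V] (G : SimpleGraph V) (S : Finset V) (k : ℕ)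
    (I J : Finset V) : Prop :=
  Relation.ReflTransGen (fun I J => I ⊆ S ∧ J ⊆ S ∧ TarStep G k I J) I J

/-- The maximum size of an independent set of `G` that is TAR_k-reachable from `I`. -/
noncomputable def RIS [DecidableEq V] (G : SimpleGraph V) (k : ℕ) (I : Finset V) : ℕ :=
  sSup {m | ∃ J : Finset V, TarReach G k I J ∧ J.card = m}

/-- The maximum size of an independent set TAR_k-reachable from `I` inside the
subgraph of `G` induced by `S`. -/
noncomputable def RISOn [DecidableEq V] (G : SimpleGraph V) (S : Finset V) (k : ℕ)
    (I : Finset V) : ℕ :=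
  sSup {m | ∃ J : Finset V, TarReachOn G S k I J ∧ J.card = m}


/-! Every set reachable from `I` keeps at least `y` tokens on `Sᶜ`, so a TAR_ℓ sequence restricts
to a TAR_y sequence on `Sᶜ`; hence every reachable set has at least
`ℓ - RISOn G Sᶜ y (I ∩ Sᶜ)` tokens on `S`. Conversely, take a reachable set with exactly `y`
tokens on `Sᶜ`: since no edge joins `S` and `Sᶜ`, its part on `Sᶜ` can be moved to a largest set
reachable there while its part on `S` stays fixed, and then surplus tokens on `S` can be removed.
The second equation is the first one for `Sᶜ` in place of `S`. -/

section TokenAdditionRemoval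

variable {G : SimpleGraph V} {k ℓ : ℕ}

theorem IsIndep.mono {I J : Finset V} (hI : IsIndep G I) (h : J ⊆ I) : IsIndep G J :=
  fun u hu v hv => hI u (h hu) v (h hv)

variable [DecidableEq V]

theorem IsIndep.union {A B : Finset V} (hA : IsIndep G A) (hB : IsIndep G B)
    (hAB : ∀ a ∈ A, ∀ b ∈ B, ¬ G.Adj a b) : IsIndep G (A ∪ B) := by
  intro u hu v hv
  rcases Finset.mem_union.1 hu with hu | hu <;> rcases Finset.mem_union.1 hv with hv | hv
  · exact hA u hu v hv
  · exact hAB u hu v hv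
  · exact fun h => hAB v hv u hu h.symm
  · exact hB u hu v hv

theorem TarStep.symm {I J : Finset V} (h : TarStep G k I J) : TarStep G k J I :=
  let ⟨hI, hJ, hIk, hJk, v, hv⟩ := h
  ⟨hJ, hI, hJk, hIk, v, hv.symm⟩

theorem TarReach.isIndep_and_le_card {I J : Finset V} (hI : IsIndep G I) (hℓ : ℓ ≤ I.card)
    (h : TarReach G ℓ I J) : IsIndep G J ∧ ℓ ≤ J.card := by
  induction h with
  | refl => exact ⟨hI, hℓ⟩
  | tail _ hstep _ => exact ⟨hstep.2.1, hstep.2.2.2.1⟩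

theorem TarReachOn.subset {S I J : Finset V} (h : TarReachOn G S k I J) (hI : I ⊆ S) :
    J ⊆ S := by
  induction h with
  | refl => exact hI
  | tail _ hstep _ => exact hstep.2.1

theorem TarReachOn.symm {S I J : Finset V} (h : TarReachOn G S k I J) : TarReachOn G S k J I :=
  Relation.ReflTransGen.mono (fun _ _ ⟨hI, hJ, hstep⟩ => ⟨hJ, hI, hstep.symm⟩) _ _
    (Relation.reflTransGen_swap.2 h)

theorem tarReach_of_subset {M J : Finset V} (hM : IsIndep G M) (hJM : J ⊆ M) (hJ : ℓ ≤ J.card) :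
    TarReach G ℓ M J := by
  induction hn : (M \ J).card generalizing M with
  | zero =>
    rw [Finset.card_eq_zero, Finset.sdiff_eq_empty_iff_subset] at hn
    rw [hJM.antisymm hn]
    exact .refl
  | succ n ih =>
    obtain ⟨a, ha⟩ := (Finset.card_pos (s := M \ J)).1 (by omega)
    obtain ⟨haM, haJ⟩ := Finset.mem_sdiff.1 ha
    have hJM' : J ⊆ M.erase a := fun z hz =>
      Finset.mem_erase.2 ⟨ne_of_mem_of_not_mem hz haJ, hJM hz⟩
    have hstep : TarStep G ℓ M (M.erase a) :=
      ⟨hM, hM.mono (M.erase_subset a), hJ.trans (Finset.card_le_card hJM),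
        hJ.trans (Finset.card_le_card hJM'), a, Or.inr (Finset.insert_erase haM).symm⟩
    refine Relation.ReflTransGen.head hstep (ih (hM.mono (M.erase_subset a)) hJM' ?_)
    rw [Finset.erase_sdiff_comm, Finset.card_erase_of_mem ha, hn, Nat.add_sub_cancel]

theorem TarStep.inter {T I J : Finset V} (h : TarStep G ℓ I J) (hI : k ≤ (I ∩ T).card)
    (hJ : k ≤ (J ∩ T).card) : TarReachOn G T k (I ∩ T) (J ∩ T) := by
  obtain ⟨hIind, hJind, -, -, v, hv⟩ := h
  by_cases hvT : v ∈ T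
  · refine .single ⟨Finset.inter_subset_right, Finset.inter_subset_right,
      hIind.mono Finset.inter_subset_left, hJind.mono Finset.inter_subset_left, hI, hJ, v, ?_⟩
    rcases hv with rfl | rfl
    exacts [Or.inl (Finset.insert_inter_of_mem hvT), Or.inr (Finset.insert_inter_of_mem hvT)]
  · rcases hv with rfl | rfl <;> rw [Finset.insert_inter_of_notMem hvT] <;> exact .refl

theorem TarReach.inter {T I J : Finset V} (hk : ∀ K, TarReach G ℓ I K → k ≤ (K ∩ T).card)
    (h : TarReach G ℓ I J) : TarReachOn G T k (I ∩ T) (J ∩ T) := by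
  induction h with
  | refl => exact .refl
  | tail hIK hstep ih => exact ih.trans (hstep.inter (hk _ hIK) (hk _ (hIK.tail hstep)))

theorem TarReachOn.union_left {T A P Q : Finset V} (h : TarReachOn G T k P Q)
    (hAT : Disjoint A T) (hsep : ∀ a ∈ A, ∀ b ∈ T, ¬ G.Adj a b) (hA : IsIndep G A)
    (hℓ : ℓ ≤ A.card + k) : TarReach G ℓ (A ∪ P) (A ∪ Q) := by
  have hcard : ∀ {B}, B ⊆ T → k ≤ B.card → ℓ ≤ (A ∪ B).card := fun hBT hB => by
    rw [Finset.card_union_of_disjoint (hAT.mono_right hBT)]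
    omega
  have hindep : ∀ {B}, B ⊆ T → IsIndep G B → IsIndep G (A ∪ B) := fun hBT hB =>
    hA.union hB fun a ha b hb => hsep a ha b (hBT hb)
  induction h with
  | refl => exact .refl
  | tail _ hstep ih =>
    obtain ⟨hBT, hCT, hB, hC, hBk, hCk, v, hv⟩ := hstep
    refine ih.tail ⟨hindep hBT hB, hindep hCT hC, hcard hBT hBk, hcard hCT hCk, v, ?_⟩
    rcases hv with rfl | rfl
    exacts [Or.inl (Finset.union_insert _ _ _), Or.inr (Finset.union_insert _ _ _)]

end TokenAdditionRemoval

section DisjointUnion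

variable [Fintype V] [DecidableEq V] {G : SimpleGraph V} {S I J : Finset V} {k ℓ x y : ℕ}

theorem card_inter_add_card_inter_compl (J S : Finset V) :
    (J ∩ S).card + (J ∩ Sᶜ).card = J.card := by
  rw [← Finset.sdiff_eq_inter_compl]
  exact Finset.card_inter_add_card_sdiff J S

theorem bddAbove_card_tarReachOn (G : SimpleGraph V) (S : Finset V) (k : ℕ) (I : Finset V) :
    BddAbove {m | ∃ J : Finset V, TarReachOn G S k I J ∧ J.card = m} :=
  ⟨Fintype.card V, by rintro _ ⟨K, -, rfl⟩; exact K.card_le_univ⟩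

theorem le_risOn (h : TarReachOn G S k I J) : J.card ≤ RISOn G S k I :=
  le_csSup (bddAbove_card_tarReachOn G S k I) ⟨J, h, rfl⟩

theorem exists_tarReachOn_card_eq_risOn (G : SimpleGraph V) (S : Finset V) (k : ℕ)
    (I : Finset V) : ∃ J, TarReachOn G S k I J ∧ J.card = RISOn G S k I :=
  Nat.sSup_mem (s := {m | ∃ J : Finset V, TarReachOn G S k I J ∧ J.card = m})
    ⟨I.card, I, .refl, rfl⟩ (bddAbove_card_tarReachOn G S k I)

theorem TarReach.sub_risOn_le_card_inter (hI : IsIndep G I) (hℓ : ℓ ≤ I.card)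
    (hy : ∀ K, TarReach G ℓ I K → y ≤ (K ∩ Sᶜ).card) (hJ : TarReach G ℓ I J) :
    ℓ - RISOn G Sᶜ y (I ∩ Sᶜ) ≤ (J ∩ S).card := by
  have hJSc := le_risOn (hJ.inter hy)
  have hJℓ := (hJ.isIndep_and_le_card hI hℓ).2
  have hJsplit := card_inter_add_card_inter_compl J S
  omega

theorem exists_tarReach_card_inter_eq_sub_risOn (hsep : ∀ a ∈ S, ∀ b ∉ S, ¬ G.Adj a b)
    (hI : IsIndep G I) (hℓ : ℓ ≤ I.card)
    (hy : IsLeast {m | ∃ J : Finset V, TarReach G ℓ I J ∧ (J ∩ Sᶜ).card = m} y) :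
    ∃ K, TarReach G ℓ I K ∧ (K ∩ S).card = ℓ - RISOn G Sᶜ y (I ∩ Sᶜ) := by
  obtain ⟨J, hJ, hJy⟩ := hy.1
  obtain ⟨hJind, hJℓ⟩ := hJ.isIndep_and_le_card hI hℓ
  have hproj := hJ.inter (T := Sᶜ) fun K hK => hy.2 ⟨K, hK, rfl⟩
  obtain ⟨W, hW, hWcard⟩ := exists_tarReachOn_card_eq_risOn G Sᶜ y (I ∩ Sᶜ)
  have hWS : W ⊆ Sᶜ := hW.subset Finset.inter_subset_right
  have hyW : y ≤ W.card := hJy ▸ hWcard ▸ le_risOn hproj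
  have hJsplit := card_inter_add_card_inter_compl J S
  have hlift : TarReach G ℓ J (J ∩ S ∪ W) := by
    have h := TarReachOn.union_left (ℓ := ℓ) (hproj.symm.trans hW)
      (disjoint_compl_right.mono_left Finset.inter_subset_right)
      (fun a ha b hb => hsep a (Finset.mem_inter.1 ha).2 b (Finset.mem_compl.1 hb))
      (hJind.mono Finset.inter_subset_left) (by omega)
    rwa [← Finset.sdiff_eq_inter_compl, Finset.union_comm, Finset.sdiff_union_inter] at h
  obtain ⟨hMind, -⟩ := TarReach.isIndep_and_le_card hI hℓ (hJ.trans hlift)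
  obtain ⟨A, hA, hAcard⟩ := Finset.exists_subset_card_eq (s := J ∩ S)
    (n := ℓ - RISOn G Sᶜ y (I ∩ Sᶜ)) (by omega)
  have hAW : Disjoint A W := disjoint_compl_right.mono (hA.trans Finset.inter_subset_right) hWS
  refine ⟨A ∪ W, (hJ.trans hlift).trans (tarReach_of_subset hMind
    (Finset.union_subset_union_left hA) ?_), ?_⟩
  · rw [Finset.card_union_of_disjoint hAW]
    omega
  · rw [Finset.union_inter_distrib_right,
      Finset.inter_eq_left.2 (hA.trans Finset.inter_subset_right),
      Finset.disjoint_iff_inter_eq_empty.1 (disjoint_compl_left.mono_left hWS),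
      Finset.union_empty, hAcard]

theorem eq_sub_risOn_of_isLeast (hsep : ∀ a ∈ S, ∀ b ∉ S, ¬ G.Adj a b)
    (hI : IsIndep G I) (hℓ : ℓ ≤ I.card)
    (hx : IsLeast {m | ∃ J : Finset V, TarReach G ℓ I J ∧ (J ∩ S).card = m} x)
    (hy : IsLeast {m | ∃ J : Finset V, TarReach G ℓ I J ∧ (J ∩ Sᶜ).card = m} y) :
    x = ℓ - RISOn G Sᶜ y (I ∩ Sᶜ) := by
  obtain ⟨J, hJ, rfl⟩ := hx.1
  obtain ⟨K, hK, hKS⟩ := exists_tarReach_card_inter_eq_sub_risOn hsep hI hℓ hy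
  exact le_antisymm (hKS ▸ hx.2 ⟨K, hK, rfl⟩)
    (hJ.sub_risOn_le_card_inter hI hℓ fun K hK => hy.2 ⟨K, hK, rfl⟩)

end DisjointUnion

/-- For a disjoint union (no edges between `S` and `Sᶜ`), the minimum numbers
of tokens that can be reached on the two sides form an `ℓ`-stable tuple. -/
theorem min_tokens_stable [Fintype V] [DecidableEq V] (G : SimpleGraph V)
    (S : Finset V) (hsep : ∀ a ∈ S, ∀ b ∉ S, ¬ G.Adj a b)
    (I : Finset V) (hI : IsIndep G I) (ℓ : ℕ) (hℓ : ℓ ≤ I.card) (x y : ℕ)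
    (hx : IsLeast {m | ∃ J : Finset V, TarReach G ℓ I J ∧ (J ∩ S).card = m} x)
    (hy : IsLeast {m | ∃ J : Finset V, TarReach G ℓ I J ∧ (J ∩ Sᶜ).card = m} y) :
    x = max 0 (ℓ - RISOn G Sᶜ y (I ∩ Sᶜ)) ∧
    y = max 0 (ℓ - RISOn G S x (I ∩ S)) := by
  have hsep' : ∀ a ∈ Sᶜ, ∀ b ∉ Sᶜ, ¬ G.Adj a b := fun a ha b hb hab =>
    hsep b (Finset.notMem_compl.1 hb) a (Finset.mem_compl.1 ha) hab.symm
  have hx' : IsLeast {m | ∃ J : Finset V, TarReach G ℓ I J ∧ (J ∩ Sᶜᶜ).card = m} x := by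
    rwa [compl_compl]
  rw [Nat.zero_max, Nat.zero_max]
  refine ⟨eq_sub_risOn_of_isLeast hsep hI hℓ hx hy, ?_⟩
  simpa only [compl_compl] using eq_sub_risOn_of_isLeast hsep' hI hℓ hy hx'
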